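/- Let α < β, b > 0, let φ₁, φ₂ : ℝ → ℝ be continuous with φ₁(x) < φ₂(x) for all x ∈ J = [αb, βb], let m ≥ 1 be a natural number, and let m_k ≥ 1 be positive integers for 0 ≤ k ≤ m. Then for every x ∈ J and every y ∈ ℝ, writing r = (y − φ₁(x))/(φ₂(x) − φ₁(x)), the bivariate shifted Bernstein–Chlodowsky–Stancu operator applied to the function (x,y) ↦ y² satisfies the exact identity B̃_m^{Cl}[y²; Δ](x, y) = r² · B̃_m^{Cl}((φ₂ − φ₁)², J)(x) + 2r · B̃_m^{Cl}((φ₂ − φ₁)·φ₁, J)(x) + B̃_m^{Cl}(φ₁², J)(x) + r·(1 − r) · Σ_{k=0}^{m} (1/m_k) · (φ̃₂(k/m) − φ̃₁(k/m))² · q̃_{m,k}(x; J), where B̃_m^{Cl}(h, J)(x) = Σ_{k=0}^{m} h((β−α)·k·b/m + αb) · q̃_{m,k}(x; J) denotes the univariate shifted Bernstein–Chlodowsky operator. -/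

import Mathlib

open Finset Filter Real

/-- Shifted Bernstein–Chlodowsky basis polynomial on `J = [αb, βb]`. -/
noncomputable def qt (α β b : ℝ) (m k : ℕ) (x : ℝ) : ℝ :=
  (1 / ((β - α) ^ m * b ^ m)) * (m.choose k : ℝ) * (x - α * b) ^ k * (β * b - x) ^ (m - k)

/-- Shifted univariate `m`-th Bernstein–Chlodowsky operator on `J = [αb, βb]`. -/
noncomputable def BCl (α β b : ℝ) (m : ℕ) (g : ℝ → ℝ) (x : ℝ) : ℝ :=
  ∑ k ∈ Finset.range (m + 1), g ((β - α) * k * b / m + α * b) * qt α β b m k x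

/-- Basis polynomial `q̃_{n,j}(y; [φ₁(x), φ₂(x)])`. -/
noncomputable def qy (φ₁ φ₂ : ℝ → ℝ) (x : ℝ) (n j : ℕ) (y : ℝ) : ℝ :=
  (n.choose j : ℝ) * ((y - φ₁ x) / (φ₂ x - φ₁ x)) ^ j *
    ((φ₂ x - y) / (φ₂ x - φ₁ x)) ^ (n - j)

/-- Bivariate shifted Bernstein–Chlodowsky–Stancu operator on the domain `Δ`
bounded by `y = φ₁(x)`, `y = φ₂(x)`, `x = αb`, `x = βb`. -/
noncomputable def BivCl (α β b : ℝ) (φ₁ φ₂ : ℝ → ℝ) (m : ℕ) (mk : ℕ → ℕ)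
    (g : ℝ → ℝ → ℝ) (x y : ℝ) : ℝ :=
  ∑ k ∈ Finset.range (m + 1), ∑ j ∈ Finset.range (mk k + 1),
    g ((β - α) * b * ((k : ℝ) / m) + α * b)
      ((φ₂ ((β - α) * b * ((k : ℝ) / m) + α * b) - φ₁ ((β - α) * b * ((k : ℝ) / m) + α * b)) *
          ((j : ℝ) / mk k) + φ₁ ((β - α) * b * ((k : ℝ) / m) + α * b)) *
      qt α β b m k x * qy φ₁ φ₂ x (mk k) j y

/-!
Along each vertical line `x = x_k` the operator is the univariate Bernstein operator of degree
`m_k` in the variable `r = (y - φ₁ x)/(φ₂ x - φ₁ x)`, applied to the square of the affine map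
`t ↦ c t + d` with `c = (φ₂ - φ₁)(x_k)`, `d = φ₁(x_k)`. The Bernstein moments
`∑ b_{n,ν}(r) = 1`, `∑ ν b_{n,ν}(r) = n r` and `∑ ν (ν - 1) b_{n,ν}(r) = n (n - 1) r²`
evaluate it as `(c r + d)² + c² r (1 - r) / n`; summing against `q̃_{m,k}(x; J)` gives the
identity.
-/

namespace bernsteinPolynomial

variable {R : Type*} [CommRing R]

lemma sum_eval (n : ℕ) (r : R) :
    ∑ ν ∈ range (n + 1), (bernsteinPolynomial R n ν).eval r = 1 := by
  simpa [Polynomial.eval_finsetSum] using congrArg (Polynomial.eval r) (sum R n)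

lemma sum_natCast_mul_eval (n : ℕ) (r : R) :
    ∑ ν ∈ range (n + 1), (ν : R) * (bernsteinPolynomial R n ν).eval r = n * r := by
  simpa [Polynomial.eval_finsetSum, nsmul_eq_mul] using
    congrArg (Polynomial.eval r) (sum_smul R n)

lemma sum_natCast_mul_natCast_sub_one_mul_eval (n : ℕ) (r : R) :
    ∑ ν ∈ range (n + 1), (ν : R) * (ν - 1) * (bernsteinPolynomial R n ν).eval r
      = n * (n - 1) * r ^ 2 := by
  have cast_mul_pred (k : ℕ) : (k : R) * ((k - 1 : ℕ) : R) = k * (k - 1) := by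
    cases k <;> simp
  simpa [Polynomial.eval_finsetSum, nsmul_eq_mul, cast_mul_pred] using
    congrArg (Polynomial.eval r) (sum_mul_smul R n)

lemma sum_affine_sq_mul_eval {K : Type*} [Field K] {n : ℕ} (hn : (n : K) ≠ 0) (r c d : K) :
    ∑ ν ∈ range (n + 1), (c * (ν / n) + d) ^ 2 * (bernsteinPolynomial K n ν).eval r
      = (c * r + d) ^ 2 + c ^ 2 * r * (1 - r) / n := by
  have expand (ν : ℕ) : (c * (ν / n) + d) ^ 2 * (bernsteinPolynomial K n ν).eval r
      = c ^ 2 / n ^ 2 * ((ν : K) * (ν - 1) * (bernsteinPolynomial K n ν).eval r)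
        + (c ^ 2 / n ^ 2 + 2 * c * d / n) * ((ν : K) * (bernsteinPolynomial K n ν).eval r)
        + d ^ 2 * (bernsteinPolynomial K n ν).eval r := by
    field_simp
    ring
  simp only [expand, sum_add_distrib, ← mul_sum, sum_natCast_mul_natCast_sub_one_mul_eval,
    sum_natCast_mul_eval, sum_eval]
  field_simp
  ring

end bernsteinPolynomial

lemma qy_eq_eval_bernsteinPolynomial {φ₁ φ₂ : ℝ → ℝ} {x : ℝ} (hφ : φ₂ x - φ₁ x ≠ 0)
    (n j : ℕ) (y : ℝ) :
    qy φ₁ φ₂ x n j y = (bernsteinPolynomial ℝ n j).eval ((y - φ₁ x) / (φ₂ x - φ₁ x)) := by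
  have hcompl : (φ₂ x - y) / (φ₂ x - φ₁ x) = 1 - (y - φ₁ x) / (φ₂ x - φ₁ x) := by
    field_simp
    ring
  simp [qy, bernsteinPolynomial, hcompl]

lemma BCl_eq_sum (α β b : ℝ) (m : ℕ) (g : ℝ → ℝ) (x : ℝ) :
    BCl α β b m g x
      = ∑ k ∈ range (m + 1), g ((β - α) * b * ((k : ℝ) / m) + α * b) * qt α β b m k x := by
  simp only [BCl, mul_div_assoc, mul_right_comm (β - α) _ b]

lemma BivCl_eq_sum_eval {φ₁ φ₂ : ℝ → ℝ} {x : ℝ} (hφ : φ₂ x - φ₁ x ≠ 0)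
    (α β b : ℝ) (m : ℕ) (mk : ℕ → ℕ) (g : ℝ → ℝ → ℝ) (y : ℝ) :
    BivCl α β b φ₁ φ₂ m mk g x y
      = ∑ k ∈ range (m + 1),
          (∑ j ∈ range (mk k + 1),
            g ((β - α) * b * ((k : ℝ) / m) + α * b)
              ((φ₂ ((β - α) * b * ((k : ℝ) / m) + α * b)
                  - φ₁ ((β - α) * b * ((k : ℝ) / m) + α * b)) * ((j : ℝ) / mk k)
                + φ₁ ((β - α) * b * ((k : ℝ) / m) + α * b))
              * (bernsteinPolynomial ℝ (mk k) j).eval ((y - φ₁ x) / (φ₂ x - φ₁ x)))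
            * qt α β b m k x := by
  simp only [BivCl, qy_eq_eval_bernsteinPolynomial hφ, sum_mul, mul_right_comm _ (qt _ _ _ _ _ _)]

theorem stmt16_general (α β b : ℝ)
    (φ₁ φ₂ : ℝ → ℝ)
    (hφ : ∀ x ∈ Set.Icc (α * b) (β * b), φ₁ x < φ₂ x)
    (m : ℕ) (mk : ℕ → ℕ) (hmk : ∀ k ≤ m, 1 ≤ mk k)
    (x : ℝ) (hx : x ∈ Set.Icc (α * b) (β * b)) (y : ℝ) :
    BivCl α β b φ₁ φ₂ m mk (fun _ t => t ^ 2) x y =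
      ((y - φ₁ x) / (φ₂ x - φ₁ x)) ^ 2 * BCl α β b m (fun t => (φ₂ t - φ₁ t) ^ 2) x +
        2 * ((y - φ₁ x) / (φ₂ x - φ₁ x)) * BCl α β b m (fun t => (φ₂ t - φ₁ t) * φ₁ t) x +
        BCl α β b m (fun t => (φ₁ t) ^ 2) x +
        ((y - φ₁ x) / (φ₂ x - φ₁ x)) * (1 - (y - φ₁ x) / (φ₂ x - φ₁ x)) *
          ∑ k ∈ Finset.range (m + 1),
            (1 / (mk k : ℝ)) *
              (φ₂ ((β - α) * b * ((k : ℝ) / m) + α * b) -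
                φ₁ ((β - α) * b * ((k : ℝ) / m) + α * b)) ^ 2 *
              qt α β b m k x := by
  have hφx : φ₂ x - φ₁ x ≠ 0 := sub_ne_zero.mpr (hφ x hx).ne'
  rw [BivCl_eq_sum_eval hφx, BCl_eq_sum, BCl_eq_sum, BCl_eq_sum, mul_sum, mul_sum, mul_sum,
    ← sum_add_distrib, ← sum_add_distrib, ← sum_add_distrib]
  refine sum_congr rfl fun k hk => ?_
  have hmk_ne : (mk k : ℝ) ≠ 0 := by
    have := hmk k (Nat.lt_succ_iff.mp (mem_range.mp hk))
    positivity
  rw [bernsteinPolynomial.sum_affine_sq_mul_eval hmk_ne]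
  ring

theorem stmt16 (α β b : ℝ) (hαβ : α < β) (hb : 0 < b)
    (φ₁ φ₂ : ℝ → ℝ) (hφ₁ : Continuous φ₁) (hφ₂ : Continuous φ₂)
    (hφ : ∀ x ∈ Set.Icc (α * b) (β * b), φ₁ x < φ₂ x)
    (m : ℕ) (hm : 1 ≤ m) (mk : ℕ → ℕ) (hmk : ∀ k ≤ m, 1 ≤ mk k)
    (x : ℝ) (hx : x ∈ Set.Icc (α * b) (β * b)) (y : ℝ) :
    BivCl α β b φ₁ φ₂ m mk (fun _ t => t ^ 2) x y =
      ((y - φ₁ x) / (φ₂ x - φ₁ x)) ^ 2 * BCl α β b m (fun t => (φ₂ t - φ₁ t) ^ 2) x +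
        2 * ((y - φ₁ x) / (φ₂ x - φ₁ x)) * BCl α β b m (fun t => (φ₂ t - φ₁ t) * φ₁ t) x +
        BCl α β b m (fun t => (φ₁ t) ^ 2) x +
        ((y - φ₁ x) / (φ₂ x - φ₁ x)) * (1 - (y - φ₁ x) / (φ₂ x - φ₁ x)) *
          ∑ k ∈ Finset.range (m + 1),
            (1 / (mk k : ℝ)) *
              (φ₂ ((β - α) * b * ((k : ℝ) / m) + α * b) -
                φ₁ ((β - α) * b * ((k : ℝ) / m) + α * b)) ^ 2 *
              qt α β b m k x :=
  stmt16_general α β b φ₁ φ₂ hφ m mk hmk x hx y
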